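/- If η is a random variable with Beta(i+1, j+1) distribution (i, j nonnegative integers), then E[η log η] = (i+1)/(i+j+2) · (H(i+1) − H(i+j+2)), where H denotes harmonic numbers. -/

import Mathlib

open MeasureTheory

/-- The `n`-th harmonic number. -/
noncomputable def H (n : ℕ) : ℝ := ∑ k ∈ Finset.range n, (1 : ℝ) / (k + 1)

/-- The Beta(i+1, j+1) distribution on ℝ, given by the density
`x^i (1-x)^j / B(i+1, j+1)` on (0,1). -/
noncomputable def betaMeasure (i j : ℕ) : Measure ℝ :=
  volume.withDensity fun x =>
    ENNReal.ofReal
      (Set.indicator (Set.Ioo (0:ℝ) 1)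
        (fun x => x ^ i * (1 - x) ^ j *
          (Real.Gamma ((i : ℝ) + (j : ℝ) + 2) /
            (Real.Gamma ((i : ℝ) + 1) * Real.Gamma ((j : ℝ) + 1)))) x)

/-!
The integrals `I(n, j) = ∫₀¹ xⁿ (1 - x)ʲ log x` satisfy `I(n, 0) = -1/(n+1)²` and, splitting
`(1 - x)ʲ⁺¹ = (1 - x)ʲ - x (1 - x)ʲ`, the recursion `I(n, j+1) = I(n, j) - I(n+1, j)`. Induction on
`j` gives `I(n, j) = B(n+1, j+1) (H n - H (n+j+1))`, the integer case of
`∫₀¹ x^(a-1) (1-x)^(b-1) log x = B(a, b) (ψ a - ψ (a+b))`. By the law of `η`, `E[η log η]` is the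
normalising constant `1 / B(i+1, j+1)` times `I(i+1, j)`.
-/

open Real Nat

lemma H_succ (n : ℕ) : H (n + 1) = H n + 1 / ((n : ℝ) + 1) := by
  simp [H, Finset.sum_range_succ]

lemma integral_pow_mul_log (n : ℕ) :
    ∫ x in (0 : ℝ)..1, x ^ n * log x = -1 / ((n : ℝ) + 1) ^ 2 := by
  let F : ℝ → ℝ := fun x => x ^ (n + 1) * log x / (n + 1) - x ^ (n + 1) / (n + 1) ^ 2
  have hF : ∀ x ∈ Set.Ioo (0 : ℝ) 1, HasDerivAt F (x ^ n * log x) x := by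
    intro x hx
    have h := (((hasDerivAt_pow (n + 1) x).mul (hasDerivAt_log hx.1.ne')).div_const
      ((n : ℝ) + 1)).sub ((hasDerivAt_pow (n + 1) x).div_const (((n : ℝ) + 1) ^ 2))
    refine (h : HasDerivAt F _ x).congr_deriv ?_
    have hx0 : x ≠ 0 := hx.1.ne'
    push_cast
    field_simp
    ring
  have hcont : Continuous fun x : ℝ => x ^ (n + 1) * log x :=
    ((continuous_pow n).mul continuous_mul_log).congr fun x => by
      simp only [Pi.mul_apply]; ring
  rw [intervalIntegral.integral_eq_sub_of_hasDerivAt_of_le zero_le_one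
    ((hcont.div_const _).sub ((continuous_pow _).div_const _)).continuousOn hF
    (intervalIntegral.intervalIntegrable_log'.continuousOn_mul (continuous_pow n).continuousOn)]
  simp [field]

lemma intervalIntegrable_pow_mul_one_sub_pow_mul_log (n j : ℕ) :
    IntervalIntegrable (fun x => x ^ n * (1 - x) ^ j * log x) volume 0 1 :=
  intervalIntegral.intervalIntegrable_log'.continuousOn_mul (by fun_prop)

theorem integral_pow_mul_one_sub_pow_mul_log (n j : ℕ) :
    ∫ x in (0 : ℝ)..1, x ^ n * (1 - x) ^ j * log x
      = n ! * j ! / (n + j + 1)! * (H n - H (n + j + 1)) := by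
  induction j generalizing n with
  | zero =>
    simp only [pow_zero, mul_one, integral_pow_mul_log, Nat.add_zero, H_succ, factorial_succ]
    push_cast
    field_simp
    ring
  | succ j ih =>
    have hsplit : ∫ x in (0 : ℝ)..1, x ^ n * (1 - x) ^ (j + 1) * log x
        = (∫ x in (0 : ℝ)..1, x ^ n * (1 - x) ^ j * log x)
          - ∫ x in (0 : ℝ)..1, x ^ (n + 1) * (1 - x) ^ j * log x := by
      rw [← intervalIntegral.integral_sub (intervalIntegrable_pow_mul_one_sub_pow_mul_log n j)
        (intervalIntegrable_pow_mul_one_sub_pow_mul_log (n + 1) j)]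
      exact intervalIntegral.integral_congr fun x _ => by ring
    rw [hsplit, ih, ih, show n + 1 + j + 1 = n + j + 1 + 1 by ring,
      show n + (j + 1) + 1 = n + j + 1 + 1 by ring]
    simp only [H_succ, factorial_succ]
    push_cast
    field_simp
    ring

lemma integral_withDensity_ofReal_indicator {X : Type*} [MeasurableSpace X] {μ : Measure X}
    {s : Set X} (hs : MeasurableSet s) {g : X → ℝ} (hg : Measurable g)
    (hg0 : ∀ x ∈ s, 0 ≤ g x) (f : X → ℝ) :
    ∫ x, f x ∂μ.withDensity (fun x => ENNReal.ofReal (s.indicator g x))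
      = ∫ x in s, g x * f x ∂μ := by
  rw [integral_withDensity_eq_integral_toReal_smul (hg.indicator hs).ennreal_ofReal
    (ae_of_all _ fun _ => ENNReal.ofReal_lt_top), ← integral_indicator hs]
  congr 1
  funext x
  by_cases hx : x ∈ s <;> simp [hx, hg0]

theorem integral_betaMeasure (i j : ℕ) (f : ℝ → ℝ) :
    ∫ x, f x ∂betaMeasure i j
      = (i + j + 1)! / (i ! * j !) * ∫ x in (0 : ℝ)..1, x ^ i * (1 - x) ^ j * f x := by
  have hGamma : Gamma ((i : ℝ) + j + 2) / (Gamma ((i : ℝ) + 1) * Gamma ((j : ℝ) + 1))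
      = (i + j + 1)! / (i ! * j !) := by
    rw [show (i : ℝ) + j + 2 = ((i + j + 1 : ℕ) : ℝ) + 1 by push_cast; ring,
      Gamma_nat_eq_factorial, Gamma_nat_eq_factorial, Gamma_nat_eq_factorial]
  have hdensity : ∀ x ∈ Set.Ioo (0 : ℝ) 1,
      0 ≤ x ^ i * (1 - x) ^ j * ((i + j + 1)! / (i ! * j !)) := fun x hx =>
    mul_nonneg (mul_nonneg (pow_nonneg hx.1.le _) (pow_nonneg (sub_nonneg.2 hx.2.le) _))
      (by positivity)
  rw [betaMeasure, hGamma, integral_withDensity_ofReal_indicator measurableSet_Ioo (by fun_prop)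
    hdensity, ← integral_Ioc_eq_integral_Ioo, ← intervalIntegral.integral_of_le zero_le_one,
    ← intervalIntegral.integral_const_mul]
  exact intervalIntegral.integral_congr fun x _ => by ring

theorem stmt_1_general (i j : ℕ) {Ω : Type*} [MeasurableSpace Ω] (P : Measure Ω)
    (η : Ω → ℝ) (hη : Measurable η)
    (hlaw : Measure.map η P = betaMeasure i j) :
    ∫ ω, η ω * Real.log (η ω) ∂P
      = (((i : ℝ) + 1) / ((i : ℝ) + (j : ℝ) + 2)) * (H (i + 1) - H (i + j + 2)) := by
  rw [← integral_map hη.aemeasurable continuous_mul_log.aestronglyMeasurable, hlaw,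
    integral_betaMeasure]
  have hexponent : ∫ x in (0 : ℝ)..1, x ^ i * (1 - x) ^ j * (x * log x)
      = ∫ x in (0 : ℝ)..1, x ^ (i + 1) * (1 - x) ^ j * log x :=
    intervalIntegral.integral_congr fun x _ => by ring
  rw [hexponent, integral_pow_mul_one_sub_pow_mul_log, show i + 1 + j + 1 = i + j + 2 by ring]
  simp only [factorial_succ, show i + j + 2 = i + j + 1 + 1 by ring]
  push_cast
  field_simp
  ring

theorem stmt_1 (i j : ℕ) {Ω : Type*} [MeasurableSpace Ω] (P : Measure Ω)
    [IsProbabilityMeasure P] (η : Ω → ℝ) (hη : Measurable η)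
    (hlaw : Measure.map η P = betaMeasure i j) :
    ∫ ω, η ω * Real.log (η ω) ∂P
      = (((i : ℝ) + 1) / ((i : ℝ) + (j : ℝ) + 2)) * (H (i + 1) - H (i + j + 2)) :=
  stmt_1_general i j P η hη hlaw
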